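/- The q=1 limit of the Singer cycle factorization count: lim_{q→1} t_q(n,ℓ)/(1−q)^{n−1} = (−n)^{ℓ−1} binom(ℓ,n), where t_q(n,ℓ) = [n]_q^{ℓ−1} Σ_{i=0}^{ℓ−n} (−1)^i (q−1)^{ℓ−i−1} binom(ℓ,i) [ℓ−i−1 choose n−1]_q. -/

import Mathlib

/-- The Gaussian (q-)binomial coefficient `[n choose k]_q` as a polynomial in `q`
over `ℚ`. -/
noncomputable def qbinomQ : ℕ → ℕ → Polynomial ℚ
  | _, 0 => 1
  | 0, _ + 1 => 0
  | n + 1, k + 1 => qbinomQ n k + Polynomial.X ^ (k + 1) * qbinomQ n (k + 1)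

/-- The polynomial (in `q`)
`t_q(n,ℓ) = [n]_q^{ℓ-1} Σ_{i=0}^{ℓ-n} (-1)^i (q-1)^{ℓ-i-1} binom(ℓ,i) [ℓ-i-1 choose n-1]_q`. -/
noncomputable def tq (n ℓ : ℕ) : Polynomial ℚ :=
  (∑ i ∈ Finset.range n, Polynomial.X ^ i) ^ (ℓ - 1)
    * ∑ i ∈ Finset.range (ℓ - n + 1),
        (-1 : Polynomial ℚ) ^ i * (Polynomial.X - 1) ^ (ℓ - i - 1)
          * (ℓ.choose i : Polynomial ℚ) * qbinomQ (ℓ - i - 1) (n - 1)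

/-!
Every exponent `ℓ - i - 1` of `q - 1` in the sum defining `t_q(n,ℓ)` is at least `n - 1`, so
`(1 - q)^{n-1}` divides `t_q(n,ℓ)` termwise. At `q = 1` the quotient keeps only the term
`i = ℓ - n`, whose factor `[n-1 choose n-1]_q` is `1`, while `[n]_q` becomes `n`; this gives
`(-1)^{n-1} n^{ℓ-1} (-1)^{ℓ-n} binom(ℓ, n) = (-n)^{ℓ-1} binom(ℓ, n)`.
-/

open Polynomial Finset

lemma qbinomQ_eq_zero_of_lt {n k : ℕ} (h : n < k) : qbinomQ n k = 0 := by
  induction n generalizing k with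
  | zero =>
    obtain ⟨k, rfl⟩ := Nat.exists_eq_succ_of_ne_zero (by omega : k ≠ 0)
    rfl
  | succ n ih =>
    obtain ⟨k, rfl⟩ := Nat.exists_eq_succ_of_ne_zero (by omega : k ≠ 0)
    rw [qbinomQ, ih (by omega), ih (by omega), mul_zero, add_zero]

lemma qbinomQ_self (n : ℕ) : qbinomQ n n = 1 := by
  induction n with
  | zero => rfl
  | succ n ih => rw [qbinomQ, ih, qbinomQ_eq_zero_of_lt n.lt_succ_self, mul_zero, add_zero]

lemma eval_sum_range_mul_X_sub_C_pow {R : Type*} [CommRing R] (a : R) (m : ℕ) (f : ℕ → R[X]) :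
    (∑ i ∈ range (m + 1), f i * (X - C a) ^ (m - i)).eval a = (f m).eval a := by
  rw [eval_finsetSum, sum_range_succ, Nat.sub_self, pow_zero, mul_one,
    sum_eq_zero, zero_add]
  intro i hi
  rw [mem_range] at hi
  rw [eval_mul, eval_pow, eval_sub, eval_X, eval_C, sub_self,
    zero_pow (by omega), mul_zero]

noncomputable def tqQuotient (n ℓ : ℕ) : ℚ[X] :=
  (-1) ^ (n - 1) * (∑ i ∈ range n, X ^ i) ^ (ℓ - 1) *
    ∑ i ∈ range (ℓ - n + 1),
      (-1) ^ i * (ℓ.choose i : ℚ[X]) * qbinomQ (ℓ - i - 1) (n - 1) * (X - 1) ^ (ℓ - n - i)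

lemma tq_eq_one_sub_X_pow_mul_tqQuotient {n ℓ : ℕ} (hn : 1 ≤ n) (hℓ : n ≤ ℓ) :
    tq n ℓ = (1 - X) ^ (n - 1) * tqQuotient n ℓ := by
  have hsum : ∑ i ∈ range (ℓ - n + 1),
      (-1 : ℚ[X]) ^ i * (X - 1) ^ (ℓ - i - 1) * (ℓ.choose i : ℚ[X]) * qbinomQ (ℓ - i - 1) (n - 1)
      = (X - 1) ^ (n - 1) * ∑ i ∈ range (ℓ - n + 1),
        (-1) ^ i * (ℓ.choose i : ℚ[X]) * qbinomQ (ℓ - i - 1) (n - 1) * (X - 1) ^ (ℓ - n - i) := by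
    rw [mul_sum]
    refine sum_congr rfl fun i hi => ?_
    rw [mem_range] at hi
    rw [show ℓ - i - 1 = (n - 1) + (ℓ - n - i) by omega, pow_add]
    ring
  have hsign : (X - 1 : ℚ[X]) ^ (n - 1) = (1 - X) ^ (n - 1) * (-1) ^ (n - 1) := by
    rw [← mul_pow]
    ring
  rw [tq, hsum, hsign, tqQuotient]
  ring

lemma eval_one_tqQuotient {n ℓ : ℕ} (hn : 1 ≤ n) (hℓ : n ≤ ℓ) :
    (tqQuotient n ℓ).eval 1 = (-(n : ℚ)) ^ (ℓ - 1) * (ℓ.choose n : ℚ) := by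
  have hsum := eval_sum_range_mul_X_sub_C_pow (1 : ℚ) (ℓ - n)
    fun i => (-1) ^ i * (ℓ.choose i : ℚ[X]) * qbinomQ (ℓ - i - 1) (n - 1)
  rw [C_1, show ℓ - (ℓ - n) - 1 = n - 1 by omega, qbinomQ_self, Nat.choose_symm hℓ] at hsum
  rw [tqQuotient, eval_mul, hsum]
  simp only [eval_mul, eval_pow, eval_neg, eval_one, eval_natCast, eval_geom_sum, one_pow,
    sum_const, card_range, nsmul_eq_mul, mul_one]
  rw [neg_pow, show ℓ - 1 = (n - 1) + (ℓ - n) by omega, pow_add]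
  ring

/-- The `q → 1` limit: `t_q(n,ℓ)/(1-q)^{n-1}` is a polynomial in `q` whose value
at `q = 1` is `(-n)^{ℓ-1} binom(ℓ,n)`. -/
theorem stmt16 (n ℓ : ℕ) (hn : 2 ≤ n) (hℓ : n ≤ ℓ) :
    ∃ p : Polynomial ℚ,
      tq n ℓ = (1 - Polynomial.X) ^ (n - 1) * p ∧
      p.eval 1 = (-(n : ℚ)) ^ (ℓ - 1) * (ℓ.choose n : ℚ) :=
  ⟨tqQuotient n ℓ, tq_eq_one_sub_X_pow_mul_tqQuotient (by omega) hℓ,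
    eval_one_tqQuotient (by omega) hℓ⟩
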